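/- Under the dyadic fixed-effects setup, for all α, α′ ∈ D one has ‖r(α) − r(α′)‖₁ ≤ ‖α − α′‖₁, i.e., the degree-matching iteration map r is nonexpansive in the ℓ₁ norm on D. -/

import Mathlib

open Finset

/-!
Along the segment from `α'` to `α` (which stays in `D`), the mean value theorem writes each
increment `p_ij(α) - p_ij(α')` as `a_ij Δ_i + b_ij Δ_j` with `a_ij = f_ij F_ji`, `b_ij = F_ij f_ji`
taken at an intermediate point, hence in `[0, 1]`. Since `p_ij = p_ji`, averaging the two orderings
gives one family `A` with `p_ij(α) - p_ij(α') = A_ij Δ_i + A_ji Δ_j`. Then `r(α) - r(α') = M Δ`,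
where `M` has diagonal `1 - (1/(n-1)) ∑_j A_ij ≥ 0` and off-diagonal entries `-A_ji/(n-1) ≤ 0`,
so every column of `M` has absolute sum exactly `1` and `M` does not expand the `ℓ₁` norm.
-/

section PairwiseStep

variable {ι : Type*} [Fintype ι] [DecidableEq ι]

theorem sum_sum_erase_comm {M : Type*} [AddCommGroup M] (g : ι → ι → M) :
    ∑ i, ∑ j ∈ univ.erase i, g i j = ∑ i, ∑ j ∈ univ.erase i, g j i := by
  simp only [sum_erase_eq_sub (mem_univ _), sum_sub_distrib]
  rw [sum_comm]

variable {A : ι → ι → ℝ} {w : ℝ}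

theorem mul_sum_erase_le_one (hA : ∀ i j, i ≠ j → A i j ∈ Set.Icc (0 : ℝ) 1) (hw₀ : 0 ≤ w)
    (hw : w * (Fintype.card ι - 1) ≤ 1) (i : ι) : w * ∑ j ∈ univ.erase i, A i j ≤ 1 := by
  have hsum : ∑ j ∈ univ.erase i, A i j ≤ Fintype.card ι - 1 := by
    have := sum_le_card_nsmul (univ.erase i) (A i) 1 fun j hj => (hA i j (ne_of_mem_erase hj).symm).2
    rw [card_erase_of_mem (mem_univ i), nsmul_one, card_univ] at this
    have hcard : 1 ≤ Fintype.card ι := Fintype.card_pos_iff.mpr ⟨i⟩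
    simpa [Nat.cast_sub hcard] using this
  calc w * ∑ j ∈ univ.erase i, A i j ≤ w * (Fintype.card ι - 1) := by gcongr
    _ ≤ 1 := hw

theorem abs_sub_mul_sum_erase_le (hA : ∀ i j, i ≠ j → A i j ∈ Set.Icc (0 : ℝ) 1) (hw₀ : 0 ≤ w)
    (hw : w * (Fintype.card ι - 1) ≤ 1) (Δ : ι → ℝ) (i : ι) :
    |Δ i - w * ∑ j ∈ univ.erase i, (A i j * Δ i + A j i * Δ j)| ≤
      (1 - w * ∑ j ∈ univ.erase i, A i j) * |Δ i| + w * ∑ j ∈ univ.erase i, A j i * |Δ j| := by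
  have hsplit : Δ i - w * ∑ j ∈ univ.erase i, (A i j * Δ i + A j i * Δ j) =
      (1 - w * ∑ j ∈ univ.erase i, A i j) * Δ i - w * ∑ j ∈ univ.erase i, A j i * Δ j := by
    rw [sum_add_distrib, ← sum_mul]
    ring
  have hdiag : 0 ≤ 1 - w * ∑ j ∈ univ.erase i, A i j :=
    sub_nonneg.mpr (mul_sum_erase_le_one hA hw₀ hw i)
  have hoff : |∑ j ∈ univ.erase i, A j i * Δ j| ≤ ∑ j ∈ univ.erase i, A j i * |Δ j| := by
    refine (abs_sum_le_sum_abs _ _).trans (sum_le_sum fun j hj => ?_)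
    rw [abs_mul, abs_of_nonneg (hA j i (ne_of_mem_erase hj)).1]
  calc _ = |(1 - w * ∑ j ∈ univ.erase i, A i j) * Δ i - w * ∑ j ∈ univ.erase i, A j i * Δ j| := by
        rw [hsplit]
    _ ≤ |(1 - w * ∑ j ∈ univ.erase i, A i j) * Δ i| + |w * ∑ j ∈ univ.erase i, A j i * Δ j| :=
        abs_sub _ _
    _ ≤ _ := by
        rw [abs_mul, abs_of_nonneg hdiag, abs_mul, abs_of_nonneg hw₀]
        gcongr

theorem sum_abs_sub_mul_sum_erase_le (hA : ∀ i j, i ≠ j → A i j ∈ Set.Icc (0 : ℝ) 1)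
    (hw₀ : 0 ≤ w) (hw : w * (Fintype.card ι - 1) ≤ 1) (Δ : ι → ℝ) :
    ∑ i, |Δ i - w * ∑ j ∈ univ.erase i, (A i j * Δ i + A j i * Δ j)| ≤ ∑ i, |Δ i| := by
  have hcancel : ∑ i, w * ∑ j ∈ univ.erase i, A j i * |Δ j| =
      ∑ i, (w * ∑ j ∈ univ.erase i, A i j) * |Δ i| := by
    simp only [← mul_sum, mul_assoc, sum_mul]
    rw [sum_sum_erase_comm fun i j => A j i * |Δ j|]
  calc _ ≤ ∑ i, ((1 - w * ∑ j ∈ univ.erase i, A i j) * |Δ i|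
        + w * ∑ j ∈ univ.erase i, A j i * |Δ j|) :=
        sum_le_sum fun i _ => abs_sub_mul_sum_erase_le hA hw₀ hw Δ i
    _ = ∑ i, |Δ i| := by
        rw [sum_add_distrib, hcancel, ← sum_add_distrib]
        exact sum_congr rfl fun i _ => by ring

end PairwiseStep

theorem exists_symmetric_coefficients {ι : Type*} (Δ : ι → ℝ) (e : ι → ι → ℝ)
    (he : ∀ i j, e i j = e j i)
    (h : ∀ i j, i ≠ j → ∃ a ∈ Set.Icc (0 : ℝ) 1, ∃ b ∈ Set.Icc (0 : ℝ) 1,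
      e i j = a * Δ i + b * Δ j) :
    ∃ A : ι → ι → ℝ, ∀ i j, i ≠ j →
      A i j ∈ Set.Icc (0 : ℝ) 1 ∧ e i j = A i j * Δ i + A j i * Δ j := by
  choose! a ha b hb hab using h
  refine ⟨fun i j => (a i j + b j i) / 2, fun i j hij => ⟨?_, ?_⟩⟩
  · obtain ⟨ha₀, ha₁⟩ := ha i j hij
    obtain ⟨hb₀, hb₁⟩ := hb j i hij.symm
    constructor <;> linarith
  · linear_combination (hab i j hij + hab j i hij.symm + he i j) / 2

theorem exists_mul_sub_mul_eq_of_hasDerivAt {F f : ℝ → ℝ} (hF : ∀ t, HasDerivAt F (f t) t)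
    (s s' u u' : ℝ) : ∃ τ ∈ Set.Ioo (0 : ℝ) 1,
      F s * F u - F s' * F u' =
        f (s' + τ * (s - s')) * F (u' + τ * (u - u')) * (s - s')
          + F (s' + τ * (s - s')) * f (u' + τ * (u - u')) * (u - u') := by
  have hline : ∀ a b t : ℝ, HasDerivAt (fun t => a + t * (b - a)) (b - a) t := fun a b t => by
    simpa using ((hasDerivAt_id t).mul_const (b - a)).const_add a
  have hderiv : ∀ t, HasDerivAt (fun t => F (s' + t * (s - s')) * F (u' + t * (u - u')))
      (f (s' + t * (s - s')) * (s - s') * F (u' + t * (u - u'))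
        + F (s' + t * (s - s')) * (f (u' + t * (u - u')) * (u - u'))) t := fun t =>
    ((hF _).comp t (hline s' s t)).mul ((hF _).comp t (hline u' u t))
  obtain ⟨τ, hτ, hslope⟩ := exists_hasDerivAt_eq_slope _ _ zero_lt_one
    (fun t _ => (hderiv t).continuousAt.continuousWithinAt) fun t _ => hderiv t
  refine ⟨τ, hτ, ?_⟩
  simp only [zero_mul, one_mul, add_zero, add_sub_cancel, sub_zero, div_one] at hslope
  linear_combination -hslope

theorem iteration_map_l1_nonexpansive_general
    (n K : ℕ) (hn : 2 ≤ n)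
    (c₁ c₂ : ℝ) (hc₁ : c₁ ∈ Set.Ioc (0 : ℝ) (1 / 2)) (hc₂ : c₂ ∈ Set.Ioc (0 : ℝ) (1 / 2))
    (F f : ℝ → ℝ) (hFf : ∀ t : ℝ, HasDerivAt F (f t) t)
    (β : Fin K → ℝ) (x : Fin n → Fin n → Fin K → ℝ) (d : Fin n → ℝ)
    (D : Set (Fin n → ℝ)) (hDconv : Convex ℝ D)
    (hFbound : ∀ α ∈ D, ∀ i j : Fin n, i ≠ j →
      F (α i + ∑ k, x i j k * β k) ∈ Set.Icc c₁ (1 - c₁))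
    (hfbound : ∀ α ∈ D, ∀ i j : Fin n, i ≠ j →
      f (α i + ∑ k, x i j k * β k) ∈ Set.Icc c₂ (1 - c₂))
    (r : (Fin n → ℝ) → Fin n → ℝ)
    (hr : ∀ α : Fin n → ℝ, ∀ i : Fin n,
      r α i = α i + (1 / ((n : ℝ) - 1)) *
        (d i - ∑ j ∈ univ.erase i,
          F (α i + ∑ k, x i j k * β k) * F (α j + ∑ k, x j i k * β k)))
    (α α' : Fin n → ℝ) (hα : α ∈ D) (hα' : α' ∈ D) :
    ∑ i, |r α i - r α' i| ≤ ∑ i, |α i - α' i| := by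
  set X : Fin n → Fin n → ℝ := fun i j => ∑ k, x i j k * β k
  set p : (Fin n → ℝ) → Fin n → Fin n → ℝ := fun γ i j => F (γ i + X i j) * F (γ j + X j i)
  have hIcc_unit : ∀ {c : ℝ}, c ∈ Set.Ioc (0 : ℝ) (1 / 2) → Set.Icc c (1 - c) ⊆ unitInterval :=
    fun hc => Set.Icc_subset_Icc hc.1.le (by linarith [hc.1])
  have hmvt : ∀ i j, i ≠ j → ∃ a ∈ unitInterval, ∃ b ∈ unitInterval,
      p α i j - p α' i j = a * (α - α') i + b * (α - α') j := by
    intro i j hij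
    obtain ⟨τ, hτ, heq⟩ := exists_mul_sub_mul_eq_of_hasDerivAt hFf
      (α i + X i j) (α' i + X i j) (α j + X j i) (α' j + X j i)
    have hθ : α' + τ • (α - α') ∈ D := hDconv.add_smul_sub_mem hα' hα (Set.Ioo_subset_Icc_self hτ)
    have hpt : ∀ k l, α' k + X k l + τ * (α k + X k l - (α' k + X k l)) =
        (α' + τ • (α - α')) k + X k l := fun k l => by
      simp only [Pi.add_apply, Pi.smul_apply, Pi.sub_apply, smul_eq_mul]
      ring
    rw [hpt i j, hpt j i] at heq
    refine ⟨_, unitInterval.mul_mem (hIcc_unit hc₂ (hfbound _ hθ i j hij))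
        (hIcc_unit hc₁ (hFbound _ hθ j i hij.symm)),
      _, unitInterval.mul_mem (hIcc_unit hc₁ (hFbound _ hθ i j hij))
        (hIcc_unit hc₂ (hfbound _ hθ j i hij.symm)), heq.trans ?_⟩
    simp only [Pi.sub_apply]
    ring
  obtain ⟨A, hA⟩ := exists_symmetric_coefficients (α - α') (fun i j => p α i j - p α' i j)
    (fun i j => by simp only [p, mul_comm]) hmvt
  have hstep : ∀ i, r α i - r α' i = (α - α') i - 1 / ((n : ℝ) - 1) *
      ∑ j ∈ univ.erase i, (A i j * (α - α') i + A j i * (α - α') j) := fun i => by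
    rw [hr, hr, ← sum_congr rfl fun j hj => (hA i j (ne_of_mem_erase hj).symm).2,
      sum_sub_distrib, Pi.sub_apply]
    ring
  have hn₁ : (1 : ℝ) < n := by exact_mod_cast hn
  have hw : 1 / ((n : ℝ) - 1) * (Fintype.card (Fin n) - 1) ≤ 1 := by
    rw [Fintype.card_fin, one_div_mul_cancel (by linarith)]
  simpa only [hstep, Pi.sub_apply] using sum_abs_sub_mul_sum_erase_le (fun i j hij => (hA i j hij).1)
    (by positivity) hw (α - α')

/-- The degree-matching iteration map `r` is nonexpansive in the
ℓ₁ norm on `D`. -/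
theorem iteration_map_l1_nonexpansive
    (n K : ℕ) (hn : 2 ≤ n) (hK : 1 ≤ K)
    (c₁ c₂ : ℝ) (hc₁ : c₁ ∈ Set.Ioc (0 : ℝ) (1 / 2)) (hc₂ : c₂ ∈ Set.Ioc (0 : ℝ) (1 / 2))
    (F f : ℝ → ℝ) (hFf : ∀ t : ℝ, HasDerivAt F (f t) t)
    (β : Fin K → ℝ) (x : Fin n → Fin n → Fin K → ℝ) (d : Fin n → ℝ)
    (D : Set (Fin n → ℝ)) (hDne : D.Nonempty) (hDconv : Convex ℝ D)
    (hFbound : ∀ α ∈ D, ∀ i j : Fin n, i ≠ j →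
      F (α i + ∑ k, x i j k * β k) ∈ Set.Icc c₁ (1 - c₁))
    (hfbound : ∀ α ∈ D, ∀ i j : Fin n, i ≠ j →
      f (α i + ∑ k, x i j k * β k) ∈ Set.Icc c₂ (1 - c₂))
    (r : (Fin n → ℝ) → Fin n → ℝ)
    (hr : ∀ α : Fin n → ℝ, ∀ i : Fin n,
      r α i = α i + (1 / ((n : ℝ) - 1)) *
        (d i - ∑ j ∈ univ.erase i,
          F (α i + ∑ k, x i j k * β k) * F (α j + ∑ k, x j i k * β k)))
    (α α' : Fin n → ℝ) (hα : α ∈ D) (hα' : α' ∈ D) :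
    ∑ i, |r α i - r α' i| ≤ ∑ i, |α i - α' i| :=
  iteration_map_l1_nonexpansive_general n K hn c₁ c₂ hc₁ hc₂ F f hFf β x d D hDconv hFbound hfbound
    r hr α α' hα hα'
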